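/- Define B_f(r) as the least n such that every r-coloring of {0,…,n−1} has a monochromatic set H with |H| > f(gs(H)). For f(d) = 2^d and all r > 0, B_f(r) > 2_{⌊log₂ r⌋}, where 2_0 = 1 and 2_{k+1} = 2^{2_k} is the tower function. -/

import Mathlib

/-!
Lower bound: colour `x` by its digits `⌊x / 2_i⌋ mod 2` for `i < t`, which uses `2^t ≤ r`
colours. Inside a block `[b·2_{t+1}, (b+1)·2_{t+1})` a monochromatic set `H` with gaps at most `d`
satisfies `|H| ≤ 2^d`: if `d ≤ 2_t`, two consecutive elements of `H` have the same parity of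
`⌊x / 2_t⌋` and differ by at most `2_t`, so all of `H` lies in one block of level `t`; otherwise
`|H|` is at most the block length `2_{t+1} = 2^{2_t} < 2^d`.

Finiteness of `B_f(r)` (without which `sInf` would be `0`) is the colour-elimination argument:
on an interval of length `L_{k+1} = L_k (2^{L_k} + 1)` coloured with `k + 1` colours, either some
window of length `L_k` misses a colour `c`, and we recurse, or every such window meets colour `c`,
whose elements then have gaps at most `L_k` and number at least `2^{L_k} + 1`.
-/

/-- `H` has gaps bounded by `d`: any element with a successor in `H` has one within `d`. -/
def GapsBdd (H : Finset ℕ) (d : ℕ) : Prop :=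
  ∀ x ∈ H, (∃ y ∈ H, x < y) → ∃ z ∈ H, x < z ∧ z ≤ x + d

/-- gap size: largest difference between consecutive elements; `1` if `|H| ≤ 1`. -/
noncomputable def gapSize (H : Finset ℕ) : ℕ :=
  if H.card ≤ 1 then 1 else sInf {d | GapsBdd H d}

/-- `X` is piecewise `d`-syndetic. -/
def PWSyndWith (d : ℕ) (X : Set ℕ) : Prop :=
  ∀ n : ℕ, ∃ H : Finset ℕ, (∀ x ∈ H, x ∈ X) ∧ n ≤ H.card ∧ GapsBdd H d

/-- `X` is piecewise syndetic. -/
def PWSynd (X : Set ℕ) : Prop := ∃ d, PWSyndWith d X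

/-- consecutive elements of `X` differ by at most `d`. -/
def SyndWith (d : ℕ) (X : Set ℕ) : Prop :=
  ∀ x ∈ X, ∃ y ∈ X, x < y ∧ y ≤ x + d

/-- `X` is syndetic: an infinite set with bounded gaps. -/
def Syndetic (X : Set ℕ) : Prop := X.Infinite ∧ ∃ d, SyndWith d X

/-- `X` is thick: contains arbitrarily long intervals. -/
def Thick (X : Set ℕ) : Prop := ∀ n : ℕ, ∃ a : ℕ, ∀ m, a ≤ m → m < a + n → m ∈ X

/-- `X` contains arbitrarily long arithmetic progressions. -/
def APSet (X : Set ℕ) : Prop := ∀ l : ℕ, ∃ a e : ℕ, 0 < e ∧ ∀ i < l, a + i * e ∈ X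

/-- The tower function: `2_0 = 1`, `2_{k+1} = 2^{2_k}`. -/
def towerN : ℕ → ℕ
  | 0 => 1
  | k + 1 => 2 ^ towerN k

/-- The Brown number `B_f(r)`: least `n` such that every `r`-coloring of `{0,…,n-1}`
has a monochromatic `H` with `|H| > f(gs(H))`. -/
noncomputable def brownB (f : ℕ → ℕ) (r : ℕ) : ℕ :=
  sInf {n : ℕ | ∀ C : ℕ → Fin r, ∃ H : Finset ℕ,
    (∀ x ∈ H, x < n) ∧ (∀ x ∈ H, ∀ y ∈ H, C x = C y) ∧ f (gapSize H) < H.card}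

open Finset

lemma gapsBdd_of_forall_lt {H : Finset ℕ} {n : ℕ} (hH : ∀ x ∈ H, x < n) : GapsBdd H n := by
  rintro x - ⟨y, hy, hxy⟩
  exact ⟨y, hy, hxy, by linarith [hH y hy]⟩

lemma gapsBdd_gapSize (H : Finset ℕ) : GapsBdd H (gapSize H) := by
  unfold gapSize
  split_ifs with hcard
  · rintro x hx ⟨y, hy, hxy⟩
    exact absurd (card_le_one.mp hcard x hx y hy) hxy.ne
  · obtain ⟨n, hn⟩ := exists_nat_subset_range H
    exact Nat.sInf_mem (s := {d | GapsBdd H d})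
      ⟨n, gapsBdd_of_forall_lt fun x hx => mem_range.mp (hn hx)⟩

lemma gapSize_le_of_gapsBdd {H : Finset ℕ} {d : ℕ} (hcard : 1 < H.card) (hd : GapsBdd H d) :
    gapSize H ≤ d := by
  rw [gapSize, if_neg hcard.not_ge]
  exact Nat.sInf_le hd

lemma GapsBdd.eq_of_forall_near {α : Type*} {H : Finset ℕ} {d : ℕ} (hH : GapsBdd H d)
    {f : ℕ → α} (hf : ∀ x ∈ H, ∀ z ∈ H, x < z → z ≤ x + d → f x = f z) :
    ∀ x ∈ H, ∀ y ∈ H, f x = f y := by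
  suffices key : ∀ n, ∀ x ∈ H, ∀ y ∈ H, x ≤ y → y - x = n → f x = f y by
    intro x hx y hy
    rcases le_total x y with hxy | hyx
    · exact key _ x hx y hy hxy rfl
    · exact (key _ y hy x hx hyx rfl).symm
  intro n
  induction n using Nat.strong_induction_on with
  | _ n ih =>
    intro x hx y hy hxy hn
    rcases hxy.eq_or_lt with rfl | hxy
    · rfl
    obtain ⟨z, hz, hxz, hzx⟩ := hH x hx ⟨y, hy, hxy⟩
    by_cases hzy : z ≤ y
    · exact (hf x hx z hz hxz hzx).trans (ih (y - z) (by omega) z hz y hy hzy rfl)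
    · exact hf x hx y hy hxy (by omega)

lemma card_le_of_div_eq {H : Finset ℕ} {n : ℕ} (hn : 0 < n)
    (hH : ∀ x ∈ H, ∀ y ∈ H, x / n = y / n) : H.card ≤ n := by
  rcases H.eq_empty_or_nonempty with rfl | ⟨m, hm⟩
  · simp
  calc H.card ≤ (Ico (m / n * n) (m / n * n + n)).card := by
        refine card_le_card fun x hx => mem_Ico.mpr ?_
        rw [hH m hm x hx]
        exact ⟨Nat.div_mul_le_self x n, Nat.lt_div_mul_add hn⟩
    _ = n := by simp

lemma div_eq_div_of_mod_two_eq {x z n : ℕ} (hn : 0 < n) (hxz : x ≤ z) (hzx : z ≤ x + n)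
    (hpar : x / n % 2 = z / n % 2) : x / n = z / n := by
  have hle : x / n ≤ z / n := Nat.div_le_div_right hxz
  have hle' : z / n ≤ x / n + 1 := by
    rw [← Nat.add_div_right x hn]
    exact Nat.div_le_div_right hzx
  omega

lemma towerN_pos (t : ℕ) : 0 < towerN t := by
  cases t <;> simp [towerN]

lemma card_le_two_pow_of_towerN_digits {H : Finset ℕ} {d : ℕ} (hgap : GapsBdd H d) (t : ℕ)
    (hblock : ∀ x ∈ H, ∀ y ∈ H, x / towerN t = y / towerN t)
    (hdigit : ∀ i < t, ∀ x ∈ H, ∀ y ∈ H, x / towerN i % 2 = y / towerN i % 2) :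
    H.card ≤ 2 ^ d := by
  induction t with
  | zero => exact (card_le_of_div_eq (towerN_pos 0) hblock).trans Nat.one_le_two_pow
  | succ t ih =>
    by_cases hd : d ≤ towerN t
    · refine ih (hgap.eq_of_forall_near fun x hx z hz hxz hzx => ?_)
        fun i hi => hdigit i (Nat.lt_succ_of_lt hi)
      exact div_eq_div_of_mod_two_eq (towerN_pos t) hxz.le (by omega)
        (hdigit t t.lt_succ_self x hx z hz)
    · calc H.card ≤ towerN (t + 1) := card_le_of_div_eq (towerN_pos _) hblock
        _ = 2 ^ towerN t := rfl
        _ ≤ 2 ^ d := Nat.pow_le_pow_right two_pos (by omega)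

def towerDigits (t x : ℕ) : Fin t → Fin 2 :=
  fun i => ⟨x / towerN i % 2, Nat.mod_lt _ two_pos⟩

lemma card_le_two_pow_gapSize_of_towerDigits_eq {H : Finset ℕ} {t : ℕ}
    (hH : ∀ x ∈ H, x < towerN t) (hmono : ∀ x ∈ H, ∀ y ∈ H, towerDigits t x = towerDigits t y) :
    H.card ≤ 2 ^ gapSize H := by
  refine card_le_two_pow_of_towerN_digits (gapsBdd_gapSize H) t (fun x hx y hy => ?_)
    fun i hi x hx y hy => congrArg Fin.val (congrFun (hmono x hx y hy) ⟨i, hi⟩)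
  rw [Nat.div_eq_of_lt (hH x hx), Nat.div_eq_of_lt (hH y hy)]

lemma gapsBdd_of_forall_window {H : Finset ℕ} {a b L : ℕ} (hH : H ⊆ Ico a b)
    (hwin : ∀ j, a ≤ j → j + L ≤ b → ∃ x ∈ H, j ≤ x ∧ x < j + L) : GapsBdd H L := by
  rintro x hx ⟨y, hy, hxy⟩
  have hxab := mem_Ico.mp (hH hx)
  have hyab := mem_Ico.mp (hH hy)
  by_cases hfit : x + 1 + L ≤ b
  · obtain ⟨z, hz, hxz, hzx⟩ := hwin (x + 1) (by omega) hfit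
    exact ⟨z, hz, by omega, by omega⟩
  · exact ⟨y, hy, hxy, by omega⟩

lemma le_card_of_forall_window {H : Finset ℕ} {a b L m : ℕ} (hm : a + m * L ≤ b)
    (hwin : ∀ j, a ≤ j → j + L ≤ b → ∃ x ∈ H, j ≤ x ∧ x < j + L) : m ≤ H.card := by
  have hpick : ∀ i, ∃ x, i < m → x ∈ H ∧ a + i * L ≤ x ∧ x < a + i * L + L := by
    intro i
    by_cases hi : i < m
    · have : (i + 1) * L ≤ m * L := Nat.mul_le_mul_right L hi
      obtain ⟨x, hx⟩ := hwin (a + i * L) (by omega) (by rw [Nat.succ_mul] at this; omega)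
      exact ⟨x, fun _ => hx⟩
    · exact ⟨0, fun h => absurd h hi⟩
  choose f hf using hpick
  refine le_card_of_inj_on_range f (fun i hi => (hf i hi).1) fun i hi j hj hij => ?_
  have hlt : ∀ p q, p < m → q < m → p < q → f p < f q := fun p q hp hq hpq => by
    have : (p + 1) * L ≤ q * L := Nat.mul_le_mul_right L hpq
    rw [Nat.succ_mul] at this
    linarith [(hf p hp).2.2, (hf q hq).2.1]
  by_contra hne
  rcases Nat.lt_or_gt_of_ne hne with h | h
  exacts [(hlt i j hi hj h).ne hij, (hlt j i hj hi h).ne' hij]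

def brownLength : ℕ → ℕ
  | 0 => 1
  | k + 1 => brownLength k * (2 ^ brownLength k + 1)

lemma brownLength_pos (k : ℕ) : 0 < brownLength k := by
  induction k with
  | zero => simp [brownLength]
  | succ k ih => simp only [brownLength]; positivity

lemma exists_mono_two_pow_gapSize_lt {α : Type*} (C : ℕ → α) (k : ℕ) (S : Finset α) (a : ℕ)
    (hS : S.card ≤ k) (hC : ∀ x ∈ Ico a (a + brownLength k), C x ∈ S) :
    ∃ H ⊆ Ico a (a + brownLength k), (∀ x ∈ H, ∀ y ∈ H, C x = C y) ∧
      2 ^ gapSize H < H.card := by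
  classical
  induction k generalizing S a with
  | zero =>
    rw [Nat.le_zero, card_eq_zero] at hS
    subst hS
    exact absurd (hC a (by simp [brownLength])) (notMem_empty _)
  | succ k ih =>
    set L := brownLength k
    set b := a + brownLength (k + 1)
    have hlen : brownLength (k + 1) = (2 ^ L + 1) * L := by rw [brownLength, mul_comm]
    have hcS : C a ∈ S := hC a (mem_Ico.mpr ⟨le_rfl, by have := brownLength_pos (k + 1); omega⟩)
    by_cases hmiss : ∃ j, a ≤ j ∧ j + L ≤ b ∧ ∀ x ∈ Ico j (j + L), C x ≠ C a
    · obtain ⟨j, hja, hjb, hj⟩ := hmiss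
      obtain ⟨H, hHsub, hmono, hcard⟩ := ih (S.erase (C a)) j
        (by rw [card_erase_of_mem hcS]; omega)
        fun x hx => mem_erase.mpr ⟨hj x hx, hC x (Ico_subset_Ico hja hjb hx)⟩
      exact ⟨H, hHsub.trans (Ico_subset_Ico hja hjb), hmono, hcard⟩
    · push Not at hmiss
      set H := (Ico a b).filter (C · = C a)
      have hwin : ∀ j, a ≤ j → j + L ≤ b → ∃ x ∈ H, j ≤ x ∧ x < j + L := by
        intro j hja hjb
        obtain ⟨x, hx, hxc⟩ := hmiss j hja hjb
        rw [mem_Ico] at hx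
        exact ⟨x, mem_filter.mpr ⟨mem_Ico.mpr ⟨by omega, by omega⟩, hxc⟩, hx⟩
      have hcard : 2 ^ L + 1 ≤ H.card := le_card_of_forall_window (by omega) hwin
      have hgap : gapSize H ≤ L := gapSize_le_of_gapsBdd (by have := L.one_le_two_pow; omega)
        (gapsBdd_of_forall_window (filter_subset _ _) hwin)
      refine ⟨H, filter_subset _ _,
        fun x hx y hy => (mem_filter.mp hx).2.trans (mem_filter.mp hy).2.symm, ?_⟩
      calc 2 ^ gapSize H ≤ 2 ^ L := Nat.pow_le_pow_right two_pos hgap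
        _ < H.card := by omega

lemma exists_forall_exists_mono_two_pow_gapSize_lt (α : Type*) [Fintype α] :
    ∃ n, ∀ C : ℕ → α, ∃ H : Finset ℕ, (∀ x ∈ H, x < n) ∧ (∀ x ∈ H, ∀ y ∈ H, C x = C y) ∧
      2 ^ gapSize H < H.card := by
  refine ⟨brownLength (Fintype.card α), fun C => ?_⟩
  obtain ⟨H, hHsub, hmono, hcard⟩ :=
    exists_mono_two_pow_gapSize_lt C _ univ 0 le_rfl fun x _ => mem_univ (C x)
  exact ⟨H, fun x hx => by simpa using (mem_Ico.mp (hHsub hx)).2, hmono, hcard⟩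

/-- For `f(d) = 2^d`, `B_f(r) > 2_{⌊log₂ r⌋}`. -/
theorem brownB_lower_bound (r : ℕ) (hr : 0 < r) :
    towerN (Nat.log 2 r) < brownB (fun d => 2 ^ d) r := by
  set t := Nat.log 2 r
  obtain ⟨e⟩ : Nonempty ((Fin t → Fin 2) ↪ Fin r) :=
    Function.Embedding.nonempty_of_card_le (by simpa using Nat.pow_log_le_self 2 hr.ne')
  by_contra! hle
  obtain ⟨H, hlt, hmono, hcard⟩ :=
    Nat.sInf_mem (exists_forall_exists_mono_two_pow_gapSize_lt (Fin r)) (e ∘ towerDigits t)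
  have hbound : H.card ≤ 2 ^ gapSize H :=
    card_le_two_pow_gapSize_of_towerDigits_eq (fun x hx => (hlt x hx).trans_le hle)
      fun x hx y hy => e.injective (hmono x hx y hy)
  exact hcard.not_ge hbound
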